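/- arXiv:2304.13475 — 2 statements merged into one kernel-verified Lean document; each statement's English description precedes it below -/
import Mathlib

section
/- Let B be a skew left brace, S a subbrace and I an ideal of B such that I is an abelian brace and B = S·I = S + I. Then: (1) I ∩ S is an ideal of B; (2) S is a maximal subbrace of B if and only if I/(I ∩ S) is a chief factor of B (i.e., a minimal ideal of B/(I ∩ S)). -/
/-- A skew left brace: a set with two group structures `(B,+)` and `(B,·)`
satisfying `a * (b + c) = a * b - a + a * c`. -/
class SkewBrace (B : Type*) extends AddGroup B, Group B where
  mul_add_dist : ∀ a b c : B, a * (b + c) = a * b - a + a * c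

namespace SkewBraceDefs

variable {B : Type*} [SkewBrace B]

/-- The lambda map `λ_a(b) = -a + a * b`. -/
def lam (a b : B) : B := -a + a * b

/-- A subbrace: a subgroup of both group structures. -/
def IsSubbrace (S : Set B) : Prop :=
  (∃ A : AddSubgroup B, (A : Set B) = S) ∧ (∃ M : Subgroup B, (M : Set B) = S)

/-- An ideal: a left ideal that is normal in both groups. -/
def IsIdeal (I : Set B) : Prop :=
  (∃ A : AddSubgroup B, (A : Set B) = I ∧ A.Normal) ∧
  (∃ M : Subgroup B, (M : Set B) = I ∧ M.Normal) ∧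
  ∀ b : B, ∀ x ∈ I, lam b x ∈ I

/-- A maximal subbrace. -/
def IsMaximalSubbrace (S : Set B) : Prop :=
  IsSubbrace S ∧ S ≠ Set.univ ∧
    ∀ T : Set B, IsSubbrace T → S ⊆ T → T = S ∨ T = Set.univ

/-- The centre `ζ(B) = {a | a + b = b + a = a·b = b·a for all b}` of a skew brace. -/
def zeta (B : Type*) [SkewBrace B] : Set B :=
  {a : B | ∀ b : B, a + b = b + a ∧ a * b = a + b ∧ b * a = a + b}

/-- The commutator `[I,J]`: the smallest ideal containing additive commutators,
multiplicative commutators, and the elements `i * j - (i + j)`. -/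
def commIdeal (I J : Set B) : Set B :=
  ⋂₀ {K : Set B | IsIdeal K ∧ ∀ i ∈ I, ∀ j ∈ J,
      i + j - i - j ∈ K ∧ i * j * i⁻¹ * j⁻¹ ∈ K ∧ i * j - (i + j) ∈ K}

/-- The Frattini subbrace: intersection of all maximal subbraces
(`Set.univ` if there are none). -/
def Frattini (B : Type*) [SkewBrace B] : Set B :=
  ⋂₀ {S : Set B | IsMaximalSubbrace S}

/-- `I` is an ideal of the subbrace `S`. -/
def IsIdealOf (I S : Set B) : Prop :=
  I ⊆ S ∧ (0 : B) ∈ I ∧ (∀ x ∈ I, ∀ y ∈ I, x + y ∈ I) ∧ (∀ x ∈ I, -x ∈ I) ∧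
  (∀ x ∈ I, ∀ y ∈ I, x * y ∈ I) ∧ (∀ x ∈ I, x⁻¹ ∈ I) ∧
  (∀ s ∈ S, ∀ x ∈ I, s + x - s ∈ I) ∧ (∀ s ∈ S, ∀ x ∈ I, s * x * s⁻¹ ∈ I) ∧
  (∀ s ∈ S, ∀ x ∈ I, lam s x ∈ I)

/-- An abelian ideal series `B = I 0 ⊇ I 1 ⊇ ... ⊇ I n = 0`, each `I (i+1)` an
ideal of `I i` with abelian factor brace `I i / I (i+1)`. -/
def IsAbelianSeries (I : ℕ → Set B) (n : ℕ) : Prop :=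
  I 0 = Set.univ ∧ I n = {0} ∧
  ∀ i < n, IsIdealOf (I (i + 1)) (I i) ∧
    ∀ a ∈ I i, ∀ b ∈ I i,
      -(b + a) + (a + b) ∈ I (i + 1) ∧ -(a + b) + a * b ∈ I (i + 1)

/-- Solubility of a skew brace: existence of an abelian ideal series. -/
def IsSoluble (B : Type*) [SkewBrace B] : Prop :=
  ∃ n : ℕ, ∃ I : ℕ → Set B, IsAbelianSeries I n

/-- The derived series `∂_0(B) = B`, `∂_{n+1}(B) = [∂_n(B), ∂_n(B)]`. -/
def derivedSeries (B : Type*) [SkewBrace B] : ℕ → Set B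
  | 0 => Set.univ
  | n + 1 => commIdeal (derivedSeries B n) (derivedSeries B n)

end SkewBraceDefs

open SkewBraceDefs

/-!
Since `I` is abelian, `λ_i` and conjugation by `i` in either group act trivially on `I` for
`i ∈ I`. Writing `b = s · i` with `s ∈ S`, the element `b` therefore acts on `I ∩ S` as `s` does,
and `s` preserves both `I` and `S`; so `I ∩ S` is an ideal. For the second part, `T ↦ I ∩ T`
sends subbraces `T ⊇ S` to ideals between `I ∩ S` and `I`, and `K ↦ S + K = S · K` goes back;
by Dedekind's modular law (using `B = S + I`) the two maps match `S` with `I ∩ S` and `B` with `I`.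
-/

open scoped Pointwise

namespace SkewBraceDefs

variable {B : Type*} [SkewBrace B]

theorem one_eq_zero : (1 : B) = 0 := by
  simpa using (SkewBrace.mul_add_dist (1 : B) 0 0).symm

theorem mul_eq_add_lam (a b : B) : a * b = a + lam a b :=
  (add_neg_cancel_left a (a * b)).symm

theorem lam_add (a b c : B) : lam a (b + c) = lam a b + lam a c := by
  simp [lam, SkewBrace.mul_add_dist, sub_eq_add_neg, add_assoc]

theorem lam_mul (a b c : B) : lam (a * b) c = lam a (lam b c) := by
  have h : a * b + lam (a * b) c = a * b + lam a (lam b c) := by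
    rw [← mul_eq_add_lam, mul_assoc, mul_eq_add_lam a, mul_eq_add_lam b, lam_add, ← add_assoc,
      ← mul_eq_add_lam]
  exact add_left_cancel h

theorem lam_one (b : B) : lam 1 b = b := by
  simp [lam, one_eq_zero]

theorem lam_lam_inv (a b : B) : lam a (lam a⁻¹ b) = b := by
  rw [← lam_mul, mul_inv_cancel, lam_one]

variable {S T I K : Set B}

namespace IsSubbrace

theorem zero_mem (hS : IsSubbrace S) : (0 : B) ∈ S := by
  obtain ⟨⟨A, rfl⟩, -⟩ := hS
  exact A.zero_mem

theorem add_mem (hS : IsSubbrace S) {x y : B} (hx : x ∈ S) (hy : y ∈ S) : x + y ∈ S := by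
  obtain ⟨⟨A, rfl⟩, -⟩ := hS
  exact A.add_mem hx hy

theorem neg_mem (hS : IsSubbrace S) {x : B} (hx : x ∈ S) : -x ∈ S := by
  obtain ⟨⟨A, rfl⟩, -⟩ := hS
  exact A.neg_mem hx

theorem mul_mem (hS : IsSubbrace S) {x y : B} (hx : x ∈ S) (hy : y ∈ S) : x * y ∈ S := by
  obtain ⟨-, ⟨M, rfl⟩⟩ := hS
  exact M.mul_mem hx hy

theorem inv_mem (hS : IsSubbrace S) {x : B} (hx : x ∈ S) : x⁻¹ ∈ S := by
  obtain ⟨-, ⟨M, rfl⟩⟩ := hS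
  exact M.inv_mem hx

theorem inter (hS : IsSubbrace S) (hT : IsSubbrace T) : IsSubbrace (S ∩ T) := by
  obtain ⟨⟨A, rfl⟩, ⟨M, hM⟩⟩ := hS
  obtain ⟨⟨A', rfl⟩, ⟨M', hM'⟩⟩ := hT
  exact ⟨⟨A ⊓ A', AddSubgroup.coe_inf A A'⟩, ⟨M ⊓ M', by rw [Subgroup.coe_inf, hM, hM']⟩⟩

theorem eq_univ_of_subset (hT : IsSubbrace T) (hST : S ⊆ T) (hIT : I ⊆ T)
    (hadd : ∀ b : B, ∃ s ∈ S, ∃ i ∈ I, b = s + i) : T = Set.univ :=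
  Set.eq_univ_of_forall fun b => by
    obtain ⟨s, hs, i, hi, rfl⟩ := hadd b
    exact hT.add_mem (hST hs) (hIT hi)

theorem subset_of_inter_subset (hS : IsSubbrace S) (hT : IsSubbrace T) (hST : S ⊆ T)
    (hIT : I ∩ T ⊆ S) (hadd : ∀ b : B, ∃ s ∈ S, ∃ i ∈ I, b = s + i) : T ⊆ S := fun t ht => by
  obtain ⟨s, hs, i, hi, rfl⟩ := hadd t
  have hiT : i ∈ T := by simpa using hT.add_mem (hT.neg_mem (hST hs)) ht
  exact hS.add_mem hs (hIT ⟨hi, hiT⟩)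

end IsSubbrace

namespace IsIdeal

theorem isSubbrace (hI : IsIdeal I) : IsSubbrace I :=
  ⟨⟨hI.1.choose, hI.1.choose_spec.1⟩, ⟨hI.2.1.choose, hI.2.1.choose_spec.1⟩⟩

theorem add_conj_mem (hI : IsIdeal I) (g : B) {x : B} (hx : x ∈ I) : g + x + -g ∈ I := by
  obtain ⟨⟨A, rfl, hA⟩, -, -⟩ := hI
  exact hA.conj_mem x hx g

theorem conj_mem (hI : IsIdeal I) (g : B) {x : B} (hx : x ∈ I) : g * x * g⁻¹ ∈ I := by
  obtain ⟨-, ⟨M, rfl, hM⟩, -⟩ := hI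
  exact hM.conj_mem x hx g

theorem lam_mem (hI : IsIdeal I) (b : B) {x : B} (hx : x ∈ I) : lam b x ∈ I :=
  hI.2.2 b x hx

theorem of_isSubbrace (hI : IsSubbrace I) (hadd : ∀ g, ∀ x ∈ I, g + x + -g ∈ I)
    (hmul : ∀ g, ∀ x ∈ I, g * x * g⁻¹ ∈ I) (hlam : ∀ b, ∀ x ∈ I, lam b x ∈ I) :
    IsIdeal I := by
  obtain ⟨⟨A, rfl⟩, ⟨M, hM⟩⟩ := hI
  refine ⟨⟨A, rfl, ⟨fun x hx g => hadd g x hx⟩⟩, ⟨M, hM, ⟨fun x hx g => ?_⟩⟩, hlam⟩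
  rw [← SetLike.mem_coe, hM] at hx ⊢
  exact hmul g x hx

end IsIdeal

theorem add_eq_mul_of_isIdeal (S : Set B) (hK : IsIdeal K) : S + K = S * K := by
  ext x
  simp only [Set.mem_add, Set.mem_mul]
  constructor
  · rintro ⟨s, hs, k, hk, rfl⟩
    exact ⟨s, hs, lam s⁻¹ k, hK.lam_mem _ hk, by rw [mul_eq_add_lam, lam_lam_inv]⟩
  · rintro ⟨s, hs, k, hk, rfl⟩
    exact ⟨s, hs, lam s k, hK.lam_mem _ hk, (mul_eq_add_lam s k).symm⟩

theorem IsSubbrace.add_isIdeal (hS : IsSubbrace S) (hK : IsIdeal K) : IsSubbrace (S + K) := by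
  have hSK : S + K = S * K := add_eq_mul_of_isIdeal S hK
  obtain ⟨⟨A, hA⟩, ⟨M, hM⟩⟩ := hS
  obtain ⟨⟨A', hA', hA'n⟩, ⟨M', hM', hM'n⟩, -⟩ := hK
  exact ⟨⟨A ⊔ A', by rw [AddSubgroup.add_normal, hA, hA']⟩,
    ⟨M ⊔ M', by rw [Subgroup.mul_normal, hM, hM', hSK]⟩⟩

theorem isIdeal_inter_of_abelian (hS : IsSubbrace S) (hI : IsIdeal I)
    (hIab : ∀ x ∈ I, ∀ y ∈ I, x * y = x + y ∧ x + y = y + x)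
    (hmul : ∀ b : B, ∃ s ∈ S, ∃ i ∈ I, b = s * i) : IsIdeal (I ∩ S) := by
  refine IsIdeal.of_isSubbrace (hI.isSubbrace.inter hS) ?_ ?_ ?_
  · rintro g x ⟨hxI, hxS⟩
    obtain ⟨s, hs, i, hi, rfl⟩ := hmul g
    have hcomm : lam s i + x = x + lam s i := (hIab _ (hI.lam_mem s hi) x hxI).2
    have hconj : s * i + x + -(s * i) = s + x + -s := by
      rw [mul_eq_add_lam, neg_add_rev]
      simp only [add_assoc]
      rw [← add_assoc (lam s i) x, hcomm, add_assoc, add_neg_cancel_left]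
    rw [hconj]
    exact ⟨hI.add_conj_mem s hxI, hS.add_mem (hS.add_mem hs hxS) (hS.neg_mem hs)⟩
  · rintro g x ⟨hxI, hxS⟩
    obtain ⟨s, hs, i, hi, rfl⟩ := hmul g
    have hcomm : i * x = x * i := by
      rw [(hIab i hi x hxI).1, (hIab i hi x hxI).2, (hIab x hxI i hi).1]
    have hconj : s * i * x * (s * i)⁻¹ = s * x * s⁻¹ := by
      rw [mul_assoc s, hcomm]
      group
    rw [hconj]
    exact ⟨hI.conj_mem s hxI, hS.mul_mem (hS.mul_mem hs hxS) (hS.inv_mem hs)⟩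
  · rintro b x ⟨hxI, hxS⟩
    obtain ⟨s, hs, i, hi, rfl⟩ := hmul b
    have hfix : lam i x = x := by rw [lam, (hIab i hi x hxI).1, neg_add_cancel_left]
    rw [lam_mul, hfix]
    exact ⟨hI.lam_mem s hxI, hS.add_mem (hS.neg_mem hs) (hS.mul_mem hs hxS)⟩

/-- The ideals of `B / J` are the ideals of `B` containing `J`, so `I / J` is a chief factor
exactly when no ideal of `B` lies strictly between `J` and `I`. -/
def IsChiefFactor (I J : Set B) : Prop :=
  J ≠ I ∧ ∀ K : Set B, IsIdeal K → J ⊆ K → K ⊆ I → K = J ∨ K = I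

theorem IsMaximalSubbrace.isChiefFactor (hmax : IsMaximalSubbrace S) (hI : IsSubbrace I)
    (hadd : ∀ b : B, ∃ s ∈ S, ∃ i ∈ I, b = s + i) : IsChiefFactor I (I ∩ S) := by
  obtain ⟨hS, hne, hmax⟩ := hmax
  refine ⟨fun h => hne (hS.eq_univ_of_subset subset_rfl (Set.inter_eq_left.mp h) hadd), ?_⟩
  intro K hK hSK hKI
  rcases hmax (S + K) (hS.add_isIdeal hK) (Set.subset_add_left S hK.isSubbrace.zero_mem)
    with h | h
  · have hKS : K ⊆ S := h ▸ Set.subset_add_right K hS.zero_mem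
    exact .inl ((Set.subset_inter hKI hKS).antisymm hSK)
  · refine .inr (hKI.antisymm fun i hi => ?_)
    obtain ⟨s, hs, k, hk, rfl⟩ : i ∈ S + K := h ▸ Set.mem_univ i
    have hsI : s ∈ I := by simpa using hI.add_mem hi (hI.neg_mem (hKI hk))
    exact hK.isSubbrace.add_mem (hSK ⟨hsI, hs⟩) hk

theorem isMaximalSubbrace_of_isChiefFactor (hS : IsSubbrace S) (hI : IsIdeal I)
    (hIab : ∀ x ∈ I, ∀ y ∈ I, x * y = x + y ∧ x + y = y + x)
    (hmul : ∀ b : B, ∃ s ∈ S, ∃ i ∈ I, b = s * i)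
    (hadd : ∀ b : B, ∃ s ∈ S, ∃ i ∈ I, b = s + i) (hchief : IsChiefFactor I (I ∩ S)) :
    IsMaximalSubbrace S := by
  refine ⟨hS, fun h => hchief.1 (by simp [h]), fun T hT hST => ?_⟩
  have hIT : IsIdeal (I ∩ T) := isIdeal_inter_of_abelian hT hI hIab fun b => by
    obtain ⟨s, hs, i, hi, h⟩ := hmul b
    exact ⟨s, hST hs, i, hi, h⟩
  rcases hchief.2 _ hIT (Set.inter_subset_inter_right I hST) Set.inter_subset_left with h | h
  · exact .inl ((hS.subset_of_inter_subset hT hST (h.subset.trans Set.inter_subset_right)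
      hadd).antisymm hST)
  · exact .inr (hT.eq_univ_of_subset hST (Set.inter_eq_left.mp h) hadd)

end SkewBraceDefs

/-- Let `S` be a subbrace and `I` an abelian ideal of `B` with `B = S·I = S + I`.
Then (1) `I ∩ S` is an ideal of `B`; (2) `S` is a maximal subbrace iff
`I/(I ∩ S)` is a chief factor of `B`. -/
theorem statement15 (B : Type*) [SkewBrace B] (S I : Set B)
    (hS : IsSubbrace S) (hI : IsIdeal I)
    (hIab : ∀ x ∈ I, ∀ y ∈ I, x * y = x + y ∧ x + y = y + x)
    (hmul : ∀ b : B, ∃ s ∈ S, ∃ i ∈ I, b = s * i)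
    (hadd : ∀ b : B, ∃ s ∈ S, ∃ i ∈ I, b = s + i) :
    IsIdeal (I ∩ S) ∧
    (IsMaximalSubbrace S ↔
      (I ∩ S ≠ I ∧ ∀ K : Set B, IsIdeal K → I ∩ S ⊆ K → K ⊆ I →
        K = I ∩ S ∨ K = I)) :=
  ⟨isIdeal_inter_of_abelian hS hI hIab hmul, fun hmax => hmax.isChiefFactor hI.isSubbrace hadd,
    isMaximalSubbrace_of_isChiefFactor hS hI hIab hmul hadd⟩
end

section
/- Let B be a skew left brace and I a proper ideal such that B/I is an abelian brace. Let P be the set of left cosets of I in B (with respect to the multiplicative group). Then the associated solution r_B(a,b) = (λ_a(b), λ_a(b)⁻¹·a·b) of the Yang–Baxter equation satisfies r_B(C × C') = C' × C for all cosets C, C' ∈ P; i.e., (B, r_B) is uniformly P-decomposable. -/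
/-!
Let `M` be the ideal, viewed as a normal subgroup of `(B,·)`. Since `M` is closed under `+`
and under every `λ_a`, the identity `y⁻¹ x = 1 + λ_{y⁻¹}(-y + x)` shows that additive cosets of
`M` lie inside multiplicative ones. Abelianness of `B/M` then says that the projection
`π : B → B ⧸ M` turns `+` into the (commutative) product of `B ⧸ M`. Hence `π (λ_a b) = π b`,
and `π` of the second component of `r(a, b)` is `π b⁻¹ π a π b = π a`: the map `π × π`
intertwines `r` with the swap. As `r` is surjective, it maps the fibre of `π × π` over `(c, c')`
onto the fibre over `(c', c)`.
-/

open Function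

theorem image_preimage_singleton_of_semiconj {α β : Type*} {f : α → α} {φ : α → β}
    {σ : β → β} (hf : Surjective f) (hσ : Injective σ) (h : Semiconj φ f σ) (q : β) :
    f '' (φ ⁻¹' {q}) = φ ⁻¹' {σ q} := by
  ext x
  constructor
  · rintro ⟨p, hp, rfl⟩
    simp only [Set.mem_preimage, Set.mem_singleton_iff] at hp ⊢
    rw [h p, hp]
  · intro hx
    obtain ⟨p, rfl⟩ := hf x
    refine ⟨p, hσ ?_, rfl⟩
    simpa only [Set.mem_preimage, Set.mem_singleton_iff, h p] using hx

namespace SkewBrace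

open SkewBraceDefs

variable {B : Type*} [SkewBrace B]

theorem zero_eq_one : (0 : B) = 1 := by
  have h := mul_add_dist (1 : B) 0 0
  simp only [add_zero, one_mul, sub_eq_add_neg, zero_add] at h
  rw [← neg_neg (1 : B), ← h, neg_zero]

theorem inv_mul_eq_one_add_lam (y x : B) : y⁻¹ * x = 1 + lam y⁻¹ (-y + x) := by
  conv_lhs => rw [← add_neg_cancel_left y x]
  rw [mul_add_dist, inv_mul_cancel, lam, sub_eq_add_neg, add_assoc]

def solution (p : B × B) : B × B := (lam p.1 p.2, (lam p.1 p.2)⁻¹ * p.1 * p.2)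

theorem lam_sub_inv_mul (u v : B) : lam (u * v - u) ((u * v - u)⁻¹ * (u * v)) = u := by
  rw [lam, mul_inv_cancel_left, sub_eq_add_neg, neg_add_rev, neg_neg, neg_add_cancel_right]

theorem solution_sub_inv_mul (u v : B) :
    solution (u * v - u, (u * v - u)⁻¹ * (u * v)) = (u, v) := by
  simp only [solution, lam_sub_inv_mul, mul_assoc, mul_inv_cancel_left, inv_mul_cancel_left]

theorem solution_surjective : Surjective (solution (B := B)) :=
  fun ⟨u, v⟩ => ⟨_, solution_sub_inv_mul u v⟩

theorem semiconj_solution_swap {Q : Type*} [Group Q] (f : B →* Q)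
    (hf_add : ∀ x y, f (x + y) = f x * f y) (hf_comm : ∀ x y, Commute (f x) (f y)) :
    Semiconj (Prod.map f f) solution Prod.swap := by
  have hf_lam (a b : B) : f (lam a b) = f b := by
    have hf_neg_mul : f (-a) * f a = 1 := by rw [← hf_add, neg_add_cancel, zero_eq_one, map_one]
    rw [lam, hf_add, map_mul, ← mul_assoc, hf_neg_mul, one_mul]
  rintro ⟨a, b⟩
  simp only [solution, Prod.map, Prod.swap, map_mul, map_inv, hf_lam, mul_assoc,
    (hf_comm a b).eq, inv_mul_cancel_left]

theorem inv_mul_mem_of_neg_add_mem {M : Subgroup B} (hadd : ∀ x ∈ M, ∀ y ∈ M, x + y ∈ M)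
    (hlam : ∀ b, ∀ x ∈ M, lam b x ∈ M) {x y : B} (h : -y + x ∈ M) : y⁻¹ * x ∈ M := by
  rw [inv_mul_eq_one_add_lam]
  exact hadd _ M.one_mem _ (hlam _ _ h)

theorem leftCoset_eq_preimage_mk (M : Subgroup B) [M.Normal] (c : B) :
    {x : B | ∃ i ∈ (M : Set B), x = c * i} =
      (QuotientGroup.mk : B → B ⧸ M) ⁻¹' {(c : B ⧸ M)} := by
  ext x
  simp only [Set.mem_ofPred_eq, Set.mem_preimage, Set.mem_singleton_iff, SetLike.mem_coe,
    eq_comm (a := (x : B ⧸ M)), QuotientGroup.eq]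
  constructor
  · rintro ⟨i, hi, rfl⟩
    rwa [inv_mul_cancel_left]
  · exact fun h => ⟨_, h, (mul_inv_cancel_left c x).symm⟩

end SkewBrace

open SkewBraceDefs SkewBrace

theorem statement19_general (B : Type*) [SkewBrace B] (I : Set B)
    (hI : IsIdeal I)
    (hab : ∀ a b : B, -(b + a) + (a + b) ∈ I ∧ -(a + b) + a * b ∈ I) :
    ∀ a₀ b₀ : B,
      (fun p : B × B => (lam p.1 p.2, (lam p.1 p.2)⁻¹ * p.1 * p.2)) ''
          ({x : B | ∃ i ∈ I, x = a₀ * i} ×ˢ {x : B | ∃ i ∈ I, x = b₀ * i}) =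
        {x : B | ∃ i ∈ I, x = b₀ * i} ×ˢ {x : B | ∃ i ∈ I, x = a₀ * i} := by
  obtain ⟨⟨A, hA, -⟩, ⟨M, rfl, hM⟩, hlam⟩ := hI
  have hadd : ∀ x ∈ M, ∀ y ∈ M, x + y ∈ M := by
    intro x hx y hy
    rw [← SetLike.mem_coe, ← hA] at hx hy ⊢
    exact A.add_mem hx hy
  have hπ_add (x y : B) : ((x + y : B) : B ⧸ M) = x * y :=
    QuotientGroup.eq.2 (inv_mul_mem_of_neg_add_mem hadd hlam (hab x y).2)
  have hπ_comm (x y : B) : Commute (x : B ⧸ M) y := by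
    rw [Commute, SemiconjBy, ← hπ_add, ← hπ_add]
    exact QuotientGroup.eq.2 (inv_mul_mem_of_neg_add_mem hadd hlam (hab y x).1)
  intro a₀ b₀
  rw [leftCoset_eq_preimage_mk, leftCoset_eq_preimage_mk, ← Set.preimage_prod_map_prod,
    ← Set.preimage_prod_map_prod, Set.singleton_prod_singleton, Set.singleton_prod_singleton]
  exact image_preimage_singleton_of_semiconj solution_surjective Prod.swap_injective
    (semiconj_solution_swap (QuotientGroup.mk' M) hπ_add hπ_comm) _

/-- If `I` is a proper ideal of a skew brace `B` with `B/I` abelian, then the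
associated solution `r_B(a,b) = (λ_a(b), λ_a(b)⁻¹·a·b)` permutes the left cosets of
`I`: `r_B(C × C') = C' × C` for all cosets `C, C'`; i.e. `(B, r_B)` is uniformly
decomposable with respect to the partition of `B` into left cosets of `I`. -/
theorem statement19 (B : Type*) [SkewBrace B] (I : Set B)
    (hI : IsIdeal I) (hne : I ≠ Set.univ)
    (hab : ∀ a b : B, -(b + a) + (a + b) ∈ I ∧ -(a + b) + a * b ∈ I) :
    ∀ a₀ b₀ : B,
      (fun p : B × B => (lam p.1 p.2, (lam p.1 p.2)⁻¹ * p.1 * p.2)) ''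
          ({x : B | ∃ i ∈ I, x = a₀ * i} ×ˢ {x : B | ∃ i ∈ I, x = b₀ * i}) =
        {x : B | ∃ i ∈ I, x = b₀ * i} ×ˢ {x : B | ∃ i ∈ I, x = a₀ * i} :=
  statement19_general B I hI hab
end
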